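/- arXiv:1308.5490 — 2 statements merged into one kernel-verified Lean document; each statement's English description precedes it below -/
import Mathlib

section
/- If two k-permutations π and ρ of [n] have the same cycle type, then for every cycle type T, the number of neighbors of π in A(n,k) having cycle type T equals the number of neighbors of ρ having cycle type T. -/
attribute [local instance] Classical.propDecidable

def arrangementGraph (n k : ℕ) :
    SimpleGraph {π : Fin k → Fin n // Function.Injective π} where
  Adj π ρ := ∃! i, π.1 i ≠ ρ.1 i
  symm := by
    constructor
    rintro π ρ ⟨i, hi, hu⟩
    exact ⟨i, hi.symm, fun j hj => hu j hj.symm⟩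
  loopless := by constructor; rintro π ⟨i, hi, -⟩; exact hi rfl

/-- Extend a `k`-permutation `π : [k] → [n]` to a map `ℕ → ℕ` fixing everything
outside `{0,…,k-1}`, so that its dynamics encode the cycles and paths of `π`. -/
def extFun {n k : ℕ} (π : Fin k → Fin n) : ℕ → ℕ :=
  fun u => if h : u < k then (π ⟨u, h⟩ : ℕ) else u

/-- The number of elements of `[k]` lying on a cycle of length `i` of `π`. -/
noncomputable def cyclicCount {n k : ℕ} (π : Fin k → Fin n) (i : ℕ) : ℕ :=
  Nat.card {u : ℕ // u < k ∧ Function.minimalPeriod (extFun π) u = i}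

/-- The number of paths of length `i` in the cyclic decomposition of `π`. -/
noncomputable def pathCount {n k : ℕ} (π : Fin k → Fin n) (i : ℕ) : ℕ :=
  Nat.card {u : ℕ // u < k ∧ (∀ w, w < k → extFun π w ≠ u) ∧
    sInf {ℓ : ℕ | k ≤ (extFun π)^[ℓ] u} = i}

/-- Two `k`-permutations have the same cycle type iff for every `i` they have the same
number of cycles of length `i` and the same number of paths of length `i`. -/
def SameCycleType {n k : ℕ} (π ρ : Fin k → Fin n) : Prop :=
  ∀ i, cyclicCount π i = cyclicCount ρ i ∧ pathCount π i = pathCount ρ i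

/-!
Every map `f = extFun π` fixes `[k, ∞)`, maps `[0, k)` injectively into `[0, n)`, and so splits
`ℕ` into its cycles inside `[0, k)`, its paths (starting at a point of `[0, k)` outside the
image of `f` and ending at the first point of the orbit outside `[0, k)`), the fixed points of
`[k, n)` outside the image, and the fixed tail `[n, ∞)`. Two such maps whose cycles and paths
have the same length statistics also have equally many free fixed points (count `[k, n)`), so
matching up the pieces gives a bijection `e` of `ℕ` conjugating one to the other and preserving
`[0, k)` and `[0, n)`. Conjugation by `e`, i.e. relabelling positions and values by the
permutations `e` induces on `[k]` and `[n]`, is an automorphism of `A(n, k)` that preserves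
cycle types and sends `π` to `ρ`, so it matches the neighbours of `π` of each cycle type with
those of `ρ`.
-/

open Function

structure IsExtFun (n k : ℕ) (f : ℕ → ℕ) : Prop where
  apply_of_le {u : ℕ} : k ≤ u → f u = u
  apply_lt {u : ℕ} : u < k → f u < n
  injOn : Set.InjOn f (Set.Iio k)

theorem isExtFun_extFun {n k : ℕ} {π : Fin k → Fin n} (hπ : Injective π) :
    IsExtFun n k (extFun π) where
  apply_of_le hu := by simp [extFun, hu.not_gt]
  apply_lt hu := by simp [extFun, hu]
  injOn u hu v hv huv := by
    simp only [extFun, Set.mem_Iio.1 hu, Set.mem_Iio.1 hv, dif_pos] at huv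
    simpa using hπ (Fin.ext huv)

/-- For a path start, the number of edges of its path. -/
noncomputable def exitTime (k : ℕ) (f : ℕ → ℕ) (u : ℕ) : ℕ := sInf {ℓ | k ≤ f^[ℓ] u}

theorem iterate_lt_of_lt_exitTime {k : ℕ} {f : ℕ → ℕ} {u j : ℕ} (hj : j < exitTime k f u) :
    f^[j] u < k :=
  not_le.1 (Nat.notMem_of_lt_sInf (s := {ℓ | k ≤ f^[ℓ] u}) hj)

def IsPathStart (k : ℕ) (f : ℕ → ℕ) (u : ℕ) : Prop := u < k ∧ ∀ w, w < k → f w ≠ u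

def IsCycleMin (k : ℕ) (f : ℕ → ℕ) (i r : ℕ) : Prop :=
  r < k ∧ minimalPeriod f r = i ∧ ∀ j, r ≤ f^[j] r

namespace IsExtFun

variable {n k : ℕ} {f : ℕ → ℕ} {u : ℕ}

theorem iterate_of_le (hf : IsExtFun n k f) (hu : k ≤ u) (j : ℕ) : f^[j] u = u :=
  iterate_fixed (hf.apply_of_le hu) j

theorem iterate_eq_of_le_iterate (hf : IsExtFun n k f) {a b : ℕ} (ha : k ≤ f^[a] u)
    (hab : a ≤ b) : f^[b] u = f^[a] u := by
  obtain ⟨c, rfl⟩ := Nat.exists_eq_add_of_le hab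
  rw [add_comm, iterate_add_apply, hf.iterate_of_le ha]

theorem iterate_lt_of_le (hf : IsExtFun n k f) {a b : ℕ} (hb : f^[b] u < k) (hab : a ≤ b) :
    f^[a] u < k := by
  by_contra! ha
  rw [hf.iterate_eq_of_le_iterate ha hab] at hb
  omega

theorem lt_of_notMem_periodicPts (hf : IsExtFun n k f) (hu : u ∉ periodicPts f) : u < k := by
  by_contra! hku
  exact hu ⟨1, one_pos, hf.apply_of_le hku⟩

/-- While the orbit stays below `k`, injectivity lets us cancel iterates as for a permutation. -/
theorem isPeriodicPt_of_iterate_add_eq (hf : IsExtFun n k f) {a d : ℕ} (ha : f^[a] u < k)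
    (h : f^[a + d] u = f^[a] u) : IsPeriodicPt f d u := by
  induction a with
  | zero => simpa [IsPeriodicPt, IsFixedPt] using h
  | succ a ih =>
    have had : f^[a + d] u < k :=
      hf.iterate_lt_of_le (show f^[a + 1 + d] u < k by rwa [h]) (by omega)
    rw [show a + 1 + d = a + d + 1 by omega, iterate_succ_apply', iterate_succ_apply'] at h
    have ha' := hf.iterate_lt_of_le ha a.le_succ
    exact ih ha' (hf.injOn had ha' h)

theorem iterate_lt_of_mem_periodicPts (hf : IsExtFun n k f) (hu : u < k)
    (hp : u ∈ periodicPts f) (j : ℕ) : f^[j] u < k := by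
  obtain ⟨p, hp0, hper⟩ := hp
  refine hf.iterate_lt_of_le (b := p * (j + 1)) ?_ (by nlinarith)
  rwa [(hper.mul_const (j + 1)).eq]

theorem mem_periodicPts_of_iterate_lt (hf : IsExtFun n k f) (hu : f^[k] u < k) :
    u ∈ periodicPts f := by
  obtain ⟨a, b, hab, heq⟩ := Fintype.exists_ne_map_eq_of_card_lt
    (fun j : Fin (k + 1) => (⟨f^[j] u, hf.iterate_lt_of_le hu (by omega)⟩ : Fin k)) (by simp)
  wlog hlt : a < b generalizing a b
  · exact this b a hab.symm heq.symm (by omega)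
  refine ⟨b - a, by omega,
    hf.isPeriodicPt_of_iterate_add_eq (a := a) (hf.iterate_lt_of_le hu (by omega)) ?_⟩
  rw [show (a : ℕ) + (b - a) = b by omega]
  exact (Fin.ext_iff.1 heq).symm

theorem iterate_notMem_periodicPts (hf : IsExtFun n k f) (hu : u ∉ periodicPts f) {j : ℕ}
    (hj : f^[j] u < k) : f^[j] u ∉ periodicPts f := by
  rintro ⟨p, hp0, hper⟩
  refine hu ⟨p, hp0, hf.isPeriodicPt_of_iterate_add_eq hj ?_⟩
  rw [add_comm, iterate_add_apply, hper.eq]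

theorem le_iterate_exitTime (hf : IsExtFun n k f) (hu : u ∉ periodicPts f) :
    k ≤ f^[exitTime k f u] u :=
  Nat.sInf_mem (s := {ℓ | k ≤ f^[ℓ] u}) ⟨k, not_lt.1 (mt hf.mem_periodicPts_of_iterate_lt hu)⟩

theorem iterate_lt_iff_lt_exitTime (hf : IsExtFun n k f) (hu : u ∉ periodicPts f) {j : ℕ} :
    f^[j] u < k ↔ j < exitTime k f u := by
  refine ⟨fun hj => ?_, iterate_lt_of_lt_exitTime⟩
  by_contra! hle
  rw [hf.iterate_eq_of_le_iterate (hf.le_iterate_exitTime hu) hle] at hj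
  exact (hf.le_iterate_exitTime hu).not_gt hj

theorem exitTime_pos (hf : IsExtFun n k f) (hu : u ∉ periodicPts f) : 0 < exitTime k f u :=
  (hf.iterate_lt_iff_lt_exitTime hu (j := 0)).1 (hf.lt_of_notMem_periodicPts hu)

theorem iterate_lt (hf : IsExtFun n k f) (hu : u < n) (j : ℕ) : f^[j] u < n := by
  induction j with
  | zero => exact hu
  | succ j ih =>
    rw [iterate_succ_apply']
    rcases lt_or_ge (f^[j] u) k with h | h
    · exact hf.apply_lt h
    · rwa [hf.apply_of_le h]

end IsExtFun

theorem IsCycleMin.mem_periodicPts {k i r : ℕ} {f : ℕ → ℕ} (hr : IsCycleMin k f (i + 1) r) :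
    r ∈ periodicPts f :=
  minimalPeriod_pos_iff_mem_periodicPts.1 (hr.2.1 ▸ i.succ_pos)

theorem IsCycleMin.minimalPeriod_iterate {k i r : ℕ} {f : ℕ → ℕ}
    (hr : IsCycleMin k f (i + 1) r) (j : ℕ) : minimalPeriod f (f^[j] r) = i + 1 :=
  (minimalPeriod_apply_iterate hr.mem_periodicPts j).trans hr.2.1

theorem IsCycleMin.eq_of_iterate_eq {k : ℕ} {f : ℕ → ℕ} {i r r' j j' : ℕ}
    (hr : IsCycleMin k f i r) (hr' : IsCycleMin k f i r') (hj : j < i) (hj' : j' < i)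
    (h : f^[j] r = f^[j'] r') : r = r' ∧ j = j' := by
  have le_of_eq : ∀ {a b m m'}, IsCycleMin k f i a → IsCycleMin k f i b → m < i →
      f^[m] a = f^[m'] b → b ≤ a := by
    intro a b m m' ha hb hm hab
    have ha' : a = f^[i - m + m'] b := by
      rw [iterate_add_apply, ← hab, ← iterate_add_apply, Nat.sub_add_cancel hm.le, ← ha.2.1,
        iterate_minimalPeriod]
    rw [ha']
    exact hb.2.2 _
  obtain rfl : r = r' := le_antisymm (le_of_eq hr' hr hj' h.symm) (le_of_eq hr hr' hj h)
  exact ⟨rfl, iterate_injOn_Iio_minimalPeriod (by rw [hr.2.1]; exact hj)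
    (by rw [hr.2.1]; exact hj') h⟩

namespace IsExtFun

variable {n k : ℕ} {f : ℕ → ℕ} {u : ℕ}

theorem notMem_periodicPts_of_isPathStart (hf : IsExtFun n k f) {s : ℕ}
    (hs : IsPathStart k f s) : s ∉ periodicPts f := by
  rintro ⟨p, hp0, hper⟩
  obtain ⟨q, rfl⟩ : ∃ q, p = q + 1 := ⟨p - 1, by omega⟩
  refine hs.2 (f^[q] s) (hf.iterate_lt_of_mem_periodicPts hs.1 ⟨_, hp0, hper⟩ q) ?_
  rw [← iterate_succ_apply' f q s]
  exact hper

theorem exists_isPathStart_iterate_eq (hf : IsExtFun n k f) (hu : u ∉ periodicPts f) :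
    ∃ s j, IsPathStart k f s ∧ f^[j] s = u := by
  -- Walking backwards from `u` inside `[0, k)` either reaches a path start or, after `k` steps,
  -- makes `u` periodic.
  have hchain : ∀ d, (∃ s j, IsPathStart k f s ∧ f^[j] s = u) ∨ ∃ v, v < k ∧ f^[d] v = u := by
    intro d
    induction d with
    | zero => exact .inr ⟨u, hf.lt_of_notMem_periodicPts hu, rfl⟩
    | succ d ih =>
      obtain h | ⟨v, hv, hvu⟩ := ih
      · exact .inl h
      by_cases hstart : IsPathStart k f v
      · exact .inl ⟨v, d, hstart, hvu⟩
      obtain ⟨w, hw, rfl⟩ : ∃ w, w < k ∧ f w = v := by simpa [IsPathStart, hv] using hstart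
      exact .inr ⟨w, hw, by rwa [iterate_succ_apply]⟩
  obtain h | ⟨v, -, rfl⟩ := hchain k
  · exact h
  · obtain ⟨p, hp, hper⟩ := hf.mem_periodicPts_of_iterate_lt (hf.lt_of_notMem_periodicPts hu)
    exact absurd ⟨p, hp, hper.apply_iterate k⟩ hu

theorem eq_of_iterate_eq_of_isPathStart (hf : IsExtFun n k f) {s s' j j' : ℕ}
    (hs : IsPathStart k f s) (hs' : IsPathStart k f s') (hj : j ≤ exitTime k f s)
    (hj' : j' ≤ exitTime k f s') (h : f^[j] s = f^[j'] s') : s = s' ∧ j = j' := by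
  induction j generalizing j' with
  | zero =>
    cases j' with
    | zero => exact ⟨h, rfl⟩
    | succ j' =>
      rw [iterate_succ_apply'] at h
      exact (hs.2 _ (iterate_lt_of_lt_exitTime hj') h.symm).elim
  | succ j ih =>
    cases j' with
    | zero =>
      rw [iterate_succ_apply'] at h
      exact (hs'.2 _ (iterate_lt_of_lt_exitTime hj) h).elim
    | succ j' =>
      rw [iterate_succ_apply', iterate_succ_apply'] at h
      obtain ⟨rfl, rfl⟩ := ih (by omega) (by omega)
        (hf.injOn (iterate_lt_of_lt_exitTime hj) (iterate_lt_of_lt_exitTime hj') h)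
      exact ⟨rfl, rfl⟩

theorem exists_exitTime_eq_succ (hf : IsExtFun n k f) {s : ℕ} (hs : IsPathStart k f s) :
    ∃ i, exitTime k f s = i + 1 :=
  ⟨_, (Nat.succ_pred_eq_of_pos (hf.exitTime_pos (hf.notMem_periodicPts_of_isPathStart hs))).symm⟩

theorem exists_apply_eq_iterate_exitTime (hf : IsExtFun n k f) {s : ℕ}
    (hs : IsPathStart k f s) : ∃ w, w < k ∧ f w = f^[exitTime k f s] s := by
  obtain ⟨q, hq⟩ := hf.exists_exitTime_eq_succ hs
  exact ⟨f^[q] s, iterate_lt_of_lt_exitTime (by omega), by rw [hq, iterate_succ_apply']⟩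

theorem exists_isPathStart_of_le_apply (hf : IsExtFun n k f) {w : ℕ} (hw : w < k)
    (hkw : k ≤ f w) : ∃ s, IsPathStart k f s ∧ f^[exitTime k f s] s = f w := by
  have hwp : w ∉ periodicPts f := fun hp =>
    (hf.iterate_lt_of_mem_periodicPts hw hp 1).not_ge hkw
  obtain ⟨s, j, hs, rfl⟩ := hf.exists_isPathStart_iterate_eq hwp
  have hsp := hf.notMem_periodicPts_of_isPathStart hs
  have hexit : exitTime k f s = j + 1 := by
    have h1 := (hf.iterate_lt_iff_lt_exitTime hsp).1 hw
    have h2 : ¬ j + 1 < exitTime k f s := fun h =>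
      ((hf.iterate_lt_iff_lt_exitTime hsp).2 h).not_ge (by rwa [iterate_succ_apply'])
    omega
  exact ⟨s, hs, by rw [hexit, iterate_succ_apply']⟩

theorem exists_isCycleMin (hf : IsExtFun n k f) (hu : u < k) (hp : u ∈ periodicPts f) :
    ∃ r j, IsCycleMin k f (minimalPeriod f u) r ∧ j < minimalPeriod f u ∧ f^[j] r = u := by
  have hpos := minimalPeriod_pos_of_mem_periodicPts hp
  have horb : ∃ m a, f^[a] u = m := ⟨u, 0, rfl⟩
  obtain ⟨a, ha⟩ := Nat.find_spec horb
  have hr : IsCycleMin k f (minimalPeriod f u) (Nat.find horb) :=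
    ⟨ha ▸ hf.iterate_lt_of_mem_periodicPts hu hp a, ha ▸ minimalPeriod_apply_iterate hp a,
      fun j => Nat.find_min' horb ⟨j + a, by rw [iterate_add_apply, ha]⟩⟩
  refine ⟨_, (minimalPeriod f u * (a + 1) - a) % minimalPeriod f u, hr, Nat.mod_lt _ hpos, ?_⟩
  rw [← hr.2.1, iterate_mod_minimalPeriod_eq, hr.2.1, ← ha, ← iterate_add_apply,
    Nat.sub_add_cancel (by nlinarith)]
  exact ((isPeriodicPt_minimalPeriod f u).mul_const (a + 1)).eq

theorem iterate_lt_of_isCycleMin (hf : IsExtFun n k f) {i r : ℕ}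
    (hr : IsCycleMin k f (i + 1) r) (j : ℕ) : f^[j] r < k :=
  hf.iterate_lt_of_mem_periodicPts hr.1 hr.mem_periodicPts j

end IsExtFun

/-- The normal form of an `IsExtFun` map: cycles `Fin (i + 1)` labelled by `R i`, paths
`0 → 1 → ⋯ → i + 1` (with fixed endpoint) labelled by `S i`, fixed points `F`, and the
fixed tail `[n, ∞)`. -/
abbrev Model (n : ℕ) (R S : ℕ → Type) (F : Type) : Type :=
  (Σ i, R i × Fin (i + 1)) ⊕ (Σ i, S i × Fin (i + 2)) ⊕ F ⊕ {v : ℕ // n ≤ v}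

namespace Model

variable {n : ℕ} {R S R' S' : ℕ → Type} {F F' : Type}

def step : Model n R S F → Model n R S F
  | .inl ⟨i, r, j⟩ => .inl ⟨i, r, ⟨(j + 1) % (i + 1), Nat.mod_lt _ i.succ_pos⟩⟩
  | .inr (.inl ⟨i, s, j⟩) => .inr (.inl ⟨i, s, ⟨min (j + 1) (i + 1), by omega⟩⟩)
  | x => x

def IsInner : Model n R S F → Prop
  | .inl _ => True
  | .inr (.inl ⟨i, _, j⟩) => (j : ℕ) ≤ i
  | _ => False

def IsTail : Model n R S F → Prop
  | .inr (.inr (.inr _)) => True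
  | _ => False

def congr (eR : ∀ i, R i ≃ R' i) (eS : ∀ i, S i ≃ S' i) (eF : F ≃ F') :
    Model n R S F ≃ Model n R' S' F' :=
  Equiv.sumCongr (Equiv.sigmaCongrRight fun i => (eR i).prodCongr (Equiv.refl _))
    (Equiv.sumCongr (Equiv.sigmaCongrRight fun i => (eS i).prodCongr (Equiv.refl _))
      (Equiv.sumCongr eF (Equiv.refl _)))

variable (eR : ∀ i, R i ≃ R' i) (eS : ∀ i, S i ≃ S' i) (eF : F ≃ F')

theorem semiconj_congr : Semiconj (congr (n := n) eR eS eF) step step := by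
  rintro (⟨i, r, j⟩ | ⟨i, s, j⟩ | v | v) <;> rfl

theorem isInner_congr (x : Model n R S F) : (congr eR eS eF x).IsInner ↔ x.IsInner := by
  rcases x with ⟨i, r, j⟩ | ⟨i, s, j⟩ | v | v <;> rfl

theorem isTail_congr (x : Model n R S F) : (congr eR eS eF x).IsTail ↔ x.IsTail := by
  rcases x with ⟨i, r, j⟩ | ⟨i, s, j⟩ | v | v <;> rfl

end Model

def cycleMins (k : ℕ) (f : ℕ → ℕ) (i : ℕ) : Type := {r : ℕ // IsCycleMin k f i r}

def pathStarts (k : ℕ) (f : ℕ → ℕ) (i : ℕ) : Type :=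
  {u : ℕ // IsPathStart k f u ∧ exitTime k f u = i}

def freePts (n k : ℕ) (f : ℕ → ℕ) : Type := {v : ℕ // (k ≤ v ∧ v < n) ∧ ∀ w, w < k → f w ≠ v}

abbrev ModelOf (n k : ℕ) (f : ℕ → ℕ) : Type :=
  Model n (fun i => cycleMins k f (i + 1)) (fun i => pathStarts k f (i + 1)) (freePts n k f)

def realize (n k : ℕ) (f : ℕ → ℕ) : ModelOf n k f → ℕ :=
  Sum.elim (fun x => f^[x.2.2] x.2.1.1) <|
    Sum.elim (fun x => f^[x.2.2] x.2.1.1) (Sum.elim Subtype.val Subtype.val)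

theorem injective_realize_cycle {k : ℕ} {f : ℕ → ℕ} :
    Injective fun x : Σ i, cycleMins k f (i + 1) × Fin (i + 1) => f^[x.2.2] x.2.1.1 := by
  rintro ⟨i, r, j⟩ ⟨i', r', j'⟩ h
  obtain rfl : i = i' := by
    simpa using (r.2.minimalPeriod_iterate j).symm.trans
      ((congrArg (minimalPeriod f) h).trans (r'.2.minimalPeriod_iterate j'))
  obtain ⟨h₁, h₂⟩ := r.2.eq_of_iterate_eq r'.2 j.2 j'.2 h
  obtain rfl : r = r' := Subtype.ext h₁
  obtain rfl : j = j' := Fin.ext h₂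
  rfl

namespace IsExtFun

variable {n k : ℕ} {f : ℕ → ℕ} {u : ℕ}

theorem exists_eq_endpoint_or_free (hf : IsExtFun n k f) (hku : k ≤ u) (hun : u < n) :
    (∃ i, ∃ s : pathStarts k f (i + 1), f^[i + 1] s.1 = u) ∨ ∃ v : freePts n k f, v.1 = u := by
  by_cases him : ∃ w, w < k ∧ f w = u
  · obtain ⟨w, hw, rfl⟩ := him
    obtain ⟨s, hs, hsw⟩ := hf.exists_isPathStart_of_le_apply hw hku
    obtain ⟨i, hi⟩ := hf.exists_exitTime_eq_succ hs
    exact .inl ⟨i, ⟨s, hs, hi⟩, (congrArg (f^[·] s) hi).symm.trans hsw⟩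
  · push Not at him
    exact .inr ⟨⟨u, ⟨hku, hun⟩, him⟩, rfl⟩

theorem surjective_realize (hf : IsExtFun n k f) : Surjective (realize n k f) := by
  intro u
  rcases lt_or_ge u k with hu | hu
  · by_cases hp : u ∈ periodicPts f
    · obtain ⟨r, j, hr, hj, rfl⟩ := hf.exists_isCycleMin hu hp
      obtain ⟨i, hi⟩ : ∃ i, minimalPeriod f (f^[j] r) = i + 1 :=
        ⟨_, (Nat.succ_pred_eq_of_pos (minimalPeriod_pos_of_mem_periodicPts hp)).symm⟩
      rw [hi] at hr hj
      exact ⟨.inl ⟨i, ⟨r, hr⟩, ⟨j, hj⟩⟩, rfl⟩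
    · obtain ⟨s, j, hs, rfl⟩ := hf.exists_isPathStart_iterate_eq hp
      obtain ⟨i, hi⟩ := hf.exists_exitTime_eq_succ hs
      have hj := (hf.iterate_lt_iff_lt_exitTime (hf.notMem_periodicPts_of_isPathStart hs)).1 hu
      exact ⟨.inr (.inl ⟨i, ⟨s, hs, hi⟩, ⟨j, by omega⟩⟩), rfl⟩
  · rcases lt_or_ge u n with hun | hun
    · obtain ⟨i, s, rfl⟩ | ⟨v, rfl⟩ := hf.exists_eq_endpoint_or_free hu hun
      · exact ⟨.inr (.inl ⟨i, s, Fin.last _⟩), rfl⟩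
      · exact ⟨.inr (.inr (.inl v)), rfl⟩
    · exact ⟨.inr (.inr (.inr ⟨u, hun⟩)), rfl⟩

theorem injective_realize_path (hf : IsExtFun n k f) :
    Injective fun x : Σ i, pathStarts k f (i + 1) × Fin (i + 2) => f^[x.2.2] x.2.1.1 := by
  rintro ⟨i, s, j⟩ ⟨i', s', j'⟩ (h : f^[j] s.1 = f^[j'] s'.1)
  obtain ⟨h₁, h₂⟩ := hf.eq_of_iterate_eq_of_isPathStart s.2.1 s'.2.1
    (by rw [s.2.2]; exact Nat.lt_succ_iff.1 j.2) (by rw [s'.2.2]; exact Nat.lt_succ_iff.1 j'.2) h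
  obtain rfl : i = i' := by
    have := s.2.2
    rw [h₁, s'.2.2] at this
    omega
  obtain rfl : s = s' := Subtype.ext h₁
  obtain rfl : j = j' := Fin.ext h₂
  rfl

theorem injective_realize (hf : IsExtFun n k f) (hkn : k ≤ n) : Injective (realize n k f) := by
  have hfree : ∀ v v',
      realize n k f (.inr (.inr (.inl v))) ≠ realize n k f (.inr (.inr (.inr v'))) :=
    fun v v' => (v.2.1.2.trans_le v'.2).ne
  have hpath : ∀ x y, realize n k f (.inr (.inl x)) ≠ realize n k f (.inr (.inr y)) := by
    rintro ⟨i, s, j⟩ (v | v) (h : f^[j] s.1 = v.1)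
    · have hj : (j : ℕ) = exitTime k f s.1 := by
        have := mt (hf.iterate_lt_iff_lt_exitTime (hf.notMem_periodicPts_of_isPathStart s.2.1)).2
          (h ▸ v.2.1.1).not_gt
        rw [s.2.2] at this ⊢
        omega
      obtain ⟨w, hw, hwe⟩ := hf.exists_apply_eq_iterate_exitTime s.2.1
      exact v.2.2 w hw (by rw [hwe, ← hj]; exact h)
    · exact (hf.iterate_lt (s.2.1.1.trans_le hkn) j).not_ge (h ▸ v.2)
  have hcycle : ∀ x y, realize n k f (.inl x) ≠ realize n k f (.inr y) := by
    rintro ⟨i, r, j⟩ y h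
    have hlt : f^[j] r.1 < k := hf.iterate_lt_of_isCycleMin r.2 j
    rcases y with ⟨i', s, j'⟩ | v | v
    · change f^[j] r.1 = f^[j'] s.1 at h
      refine hf.iterate_notMem_periodicPts (hf.notMem_periodicPts_of_isPathStart s.2.1)
        (h ▸ hlt) ?_
      obtain ⟨p, hp, hper⟩ := r.2.mem_periodicPts
      exact h ▸ ⟨p, hp, hper.apply_iterate j⟩
    · change f^[j] r.1 = v.1 at h
      exact hlt.not_ge (h ▸ v.2.1.1)
    · change f^[j] r.1 = v.1 at h
      exact hlt.not_ge (h ▸ hkn.trans v.2)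
  exact injective_realize_cycle.sumElim ((hf.injective_realize_path).sumElim
    (Subtype.val_injective.sumElim Subtype.val_injective hfree) hpath) hcycle

theorem le_iterate_succ_pathStart (hf : IsExtFun n k f) {i : ℕ} (s : pathStarts k f (i + 1)) :
    k ≤ f^[i + 1] s.1 := by
  have := hf.le_iterate_exitTime (hf.notMem_periodicPts_of_isPathStart s.2.1)
  rwa [s.2.2] at this

theorem semiconj_realize (hf : IsExtFun n k f) (hkn : k ≤ n) :
    Semiconj (realize n k f) Model.step f := by
  rintro (⟨i, r, j⟩ | ⟨i, s, j⟩ | v | v)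
  · change f^[(j + 1) % (i + 1)] r.1 = f (f^[j] r.1)
    have hmod := iterate_mod_minimalPeriod_eq (f := f) (x := r.1) (n := j + 1)
    rw [r.2.2.1] at hmod
    rw [hmod, iterate_succ_apply']
  · change f^[min (j + 1) (i + 1)] s.1 = f (f^[j] s.1)
    rcases Nat.lt_or_ge j (i + 1) with hj | hj
    · rw [min_eq_left hj, iterate_succ_apply']
    · have hj' : (j : ℕ) = i + 1 := by omega
      rw [min_eq_right (by omega), hj', hf.apply_of_le (hf.le_iterate_succ_pathStart s)]
  · exact (hf.apply_of_le v.2.1.1).symm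
  · exact (hf.apply_of_le (hkn.trans v.2)).symm

theorem realize_lt_iff (hf : IsExtFun n k f) (hkn : k ≤ n) (x : ModelOf n k f) :
    realize n k f x < k ↔ x.IsInner := by
  rcases x with ⟨i, r, j⟩ | ⟨i, s, j⟩ | v | v
  · exact iff_of_true (hf.iterate_lt_of_isCycleMin r.2 j) trivial
  · change f^[j] s.1 < k ↔ (j : ℕ) ≤ i
    rw [hf.iterate_lt_iff_lt_exitTime (hf.notMem_periodicPts_of_isPathStart s.2.1), s.2.2]
    omega
  · exact iff_of_false v.2.1.1.not_gt id
  · exact iff_of_false (hkn.trans v.2).not_gt id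

theorem le_realize_iff (hf : IsExtFun n k f) (hkn : k ≤ n) (x : ModelOf n k f) :
    n ≤ realize n k f x ↔ x.IsTail := by
  rcases x with ⟨i, r, j⟩ | ⟨i, s, j⟩ | v | v
  · exact iff_of_false ((hf.iterate_lt_of_isCycleMin r.2 j).trans_le hkn).not_ge id
  · exact iff_of_false (hf.iterate_lt (s.2.1.1.trans_le hkn) j).not_ge id
  · exact iff_of_false v.2.1.2.not_ge id
  · exact iff_of_true v.2 trivial

theorem card_minimalPeriod_eq_succ (hf : IsExtFun n k f) (i : ℕ) :
    Nat.card {u // u < k ∧ minimalPeriod f u = i + 1} =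
      Nat.card (cycleMins k f (i + 1)) * (i + 1) := by
  have hbij : Bijective fun x : cycleMins k f (i + 1) × Fin (i + 1) =>
      (⟨f^[x.2] x.1.1, hf.iterate_lt_of_isCycleMin x.1.2 _, x.1.2.minimalPeriod_iterate _⟩ :
        {u // u < k ∧ minimalPeriod f u = i + 1}) := by
    refine ⟨fun x y h => ?_, fun ⟨u, hu, hp⟩ => ?_⟩
    · obtain ⟨h₁, h₂⟩ := x.1.2.eq_of_iterate_eq y.1.2 x.2.2 y.2.2 (congrArg Subtype.val h)
      exact Prod.ext (Subtype.ext h₁) (Fin.ext h₂)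
    · obtain ⟨r, j, hr, hj, rfl⟩ := hf.exists_isCycleMin hu
        (minimalPeriod_pos_iff_mem_periodicPts.1 (hp ▸ i.succ_pos))
      rw [hp] at hr hj
      exact ⟨(⟨r, hr⟩, ⟨j, hj⟩), rfl⟩
  rw [← Nat.card_eq_of_bijective _ hbij, Nat.card_prod, Nat.card_fin]

instance {i : ℕ} : Finite (cycleMins k f i) :=
  ((Set.finite_Iio k).subset fun _ h => h.1).to_subtype

instance {i : ℕ} : Finite (pathStarts k f i) :=
  ((Set.finite_Iio k).subset fun _ h => h.1.1).to_subtype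

instance : Finite (freePts n k f) :=
  ((Set.finite_Iio n).subset fun _ h => h.1.2).to_subtype

instance : Finite (Σ i, pathStarts k f (i + 1)) := by
  refine Finite.of_injective (fun x => (⟨x.2.1, x.2.2.1.1⟩ : Fin k)) ?_
  rintro ⟨i, s⟩ ⟨i', s'⟩ h
  have hs : s.1 = s'.1 := Fin.ext_iff.1 h
  obtain rfl : i = i' := by
    have := s.2.2
    rw [hs, s'.2.2] at this
    omega
  obtain rfl : s = s' := Subtype.ext hs
  rfl

theorem card_Ico_eq (hf : IsExtFun n k f) (hkn : k ≤ n) :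
    Nat.card {v // k ≤ v ∧ v < n} =
      Nat.card (Σ i, pathStarts k f (i + 1)) + Nat.card (freePts n k f) := by
  let emb : (Σ i, pathStarts k f (i + 1)) ⊕ freePts n k f → ModelOf n k f :=
    Sum.elim (fun x => .inr (.inl ⟨x.1, x.2, Fin.last _⟩)) fun v => .inr (.inr (.inl v))
  have hemb : Injective emb := by
    rintro (⟨i, s⟩ | v) (⟨i', s'⟩ | v') h <;>
      simp only [emb, Sum.elim_inl, Sum.elim_inr, Sum.inl.injEq, Sum.inr.injEq, reduceCtorEq] at h
    · cases h
      rfl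
    · rw [h]
  have hmem : ∀ x, k ≤ realize n k f (emb x) ∧ realize n k f (emb x) < n := by
    rintro (⟨i, s⟩ | v)
    · exact ⟨hf.le_iterate_succ_pathStart s, hf.iterate_lt (s.2.1.1.trans_le hkn) _⟩
    · exact v.2.1
  have hbij : Bijective fun x => (⟨realize n k f (emb x), hmem x⟩ : {v // k ≤ v ∧ v < n}) := by
    refine ⟨fun x y h => hemb (hf.injective_realize hkn (congrArg Subtype.val h)),
      fun ⟨u, hku, hun⟩ => ?_⟩
    obtain ⟨i, s, rfl⟩ | ⟨v, rfl⟩ := hf.exists_eq_endpoint_or_free hku hun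
    · exact ⟨.inl ⟨i, s⟩, rfl⟩
    · exact ⟨.inr v, rfl⟩
  rw [← Nat.card_eq_of_bijective _ hbij, Nat.card_sum]

end IsExtFun

theorem exists_semiconj_of_card_eq {n k : ℕ} {f g : ℕ → ℕ} (hkn : k ≤ n) (hf : IsExtFun n k f)
    (hg : IsExtFun n k g)
    (hcycle : ∀ i, Nat.card {u // u < k ∧ minimalPeriod f u = i} =
      Nat.card {u // u < k ∧ minimalPeriod g u = i})
    (hpath : ∀ i, Nat.card (pathStarts k f i) = Nat.card (pathStarts k g i)) :
    ∃ e : ℕ ≃ ℕ, Semiconj e f g ∧ (∀ u, u < k ↔ e u < k) ∧ (∀ u, u < n ↔ e u < n) := by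
  have eR (i : ℕ) : cycleMins k f (i + 1) ≃ cycleMins k g (i + 1) :=
    Classical.choice <| Finite.card_eq.1 <| Nat.eq_of_mul_eq_mul_right i.succ_pos <| by
      rw [← hf.card_minimalPeriod_eq_succ, ← hg.card_minimalPeriod_eq_succ, hcycle]
  have eS (i : ℕ) : pathStarts k f (i + 1) ≃ pathStarts k g (i + 1) :=
    Classical.choice (Finite.card_eq.1 (hpath _))
  have eF : freePts n k f ≃ freePts n k g := Classical.choice <| Finite.card_eq.1 <| by
    have := Nat.card_congr (Equiv.sigmaCongrRight eS)
    have := hf.card_Ico_eq hkn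
    have := hg.card_Ico_eq hkn
    omega
  let Ef := Equiv.ofBijective _ ⟨hf.injective_realize hkn, hf.surjective_realize⟩
  let Eg := Equiv.ofBijective _ ⟨hg.injective_realize hkn, hg.surjective_realize⟩
  let M : ModelOf n k f ≃ ModelOf n k g := Model.congr eR eS eF
  refine ⟨Ef.symm.trans (M.trans Eg),
    ((hf.semiconj_realize hkn).inverse_left Ef.left_inv Ef.right_inv).trans
      ((Model.semiconj_congr eR eS eF).trans (hg.semiconj_realize hkn)),
    fun u => ?_, fun u => ?_⟩ <;> obtain ⟨x, rfl⟩ := Ef.surjective u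
  · change realize n k f x < k ↔ realize n k g (M (Ef.symm (Ef x))) < k
    rw [Ef.symm_apply_apply, hf.realize_lt_iff hkn, hg.realize_lt_iff hkn, Model.isInner_congr]
  · change realize n k f x < n ↔ realize n k g (M (Ef.symm (Ef x))) < n
    rw [Ef.symm_apply_apply, ← not_le, ← not_le, hf.le_realize_iff hkn, hg.le_realize_iff hkn,
      Model.isTail_congr]

theorem SameCycleType.symm {n k : ℕ} {π ρ : Fin k → Fin n} (h : SameCycleType π ρ) :
    SameCycleType ρ π :=
  fun i => ⟨(h i).1.symm, (h i).2.symm⟩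

theorem SameCycleType.trans {n k : ℕ} {π ρ σ : Fin k → Fin n} (h₁ : SameCycleType π ρ)
    (h₂ : SameCycleType ρ σ) : SameCycleType π σ :=
  fun i => ⟨(h₁ i).1.trans (h₂ i).1, (h₁ i).2.trans (h₂ i).2⟩

theorem card_pathStarts_extFun {n k : ℕ} (π : Fin k → Fin n) (i : ℕ) :
    Nat.card (pathStarts k (extFun π) i) = pathCount π i :=
  Nat.card_congr (Equiv.subtypeEquivRight fun _ => and_assoc)

theorem sameCycleType_of_semiconj {n k : ℕ} {π ρ : Fin k → Fin n} (e : ℕ ≃ ℕ)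
    (hk : ∀ u, u < k ↔ e u < k) (h : Semiconj e (extFun π) (extFun ρ)) :
    SameCycleType π ρ := by
  have hk' (u : ℕ) : k ≤ u ↔ k ≤ e u := by rw [← not_lt, ← not_lt, hk]
  have hiter (ℓ u : ℕ) : (extFun ρ)^[ℓ] (e u) = e ((extFun π)^[ℓ] u) :=
    ((h.iterate_right ℓ) u).symm
  have hperiod (u : ℕ) : minimalPeriod (extFun π) u = minimalPeriod (extFun ρ) (e u) :=
    minimalPeriod_eq_minimalPeriod_iff.2 fun ℓ => by
      simp only [IsPeriodicPt, IsFixedPt, hiter, e.injective.eq_iff]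
  have hstart (u : ℕ) : IsPathStart k (extFun π) u ↔ IsPathStart k (extFun ρ) (e u) := by
    refine and_congr (hk u) ⟨fun hπ w hw hρ => ?_, fun hρ w hw hπ => ?_⟩
    · obtain ⟨w, rfl⟩ := e.surjective w
      exact hπ w ((hk w).2 hw) (e.injective (by rw [h.eq, hρ]))
    · exact hρ (e w) ((hk w).1 hw) (by rw [← h.eq, hπ])
  have hexit (u : ℕ) : exitTime k (extFun π) u = exitTime k (extFun ρ) (e u) := by
    simp only [exitTime, hiter, ← hk']
  intro i
  rw [← card_pathStarts_extFun, ← card_pathStarts_extFun]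
  exact ⟨Nat.card_congr (e.subtypeEquiv fun u => by rw [hk, hperiod]),
    Nat.card_congr (e.subtypeEquiv fun u => by rw [hstart, hexit])⟩

theorem extFun_injective {n k : ℕ} : Injective (extFun : (Fin k → Fin n) → ℕ → ℕ) :=
  fun π ρ h => funext fun i => Fin.ext (by simpa [extFun] using congrFun h i)

def relabel {n k : ℕ} (σ : Equiv.Perm (Fin k)) (τ : Equiv.Perm (Fin n)) :
    arrangementGraph n k ≃g arrangementGraph n k where
  toEquiv := (σ.arrowCongr τ).subtypeEquiv fun ζ =>
    ((EquivLike.comp_injective _ τ).trans (EquivLike.injective_comp σ.symm ζ)).symm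
  map_rel_iff' {a b} := by
    change (∃! i, τ (a.1 (σ.symm i)) ≠ τ (b.1 (σ.symm i))) ↔ ∃! i, a.1 i ≠ b.1 i
    simp only [τ.injective.ne_iff]
    exact σ.symm.existsUnique_congr_right (q := fun i => a.1 i ≠ b.1 i)

def finPerm (e : ℕ ≃ ℕ) {m : ℕ} (he : ∀ u, u < m ↔ e u < m) : Equiv.Perm (Fin m) :=
  Fin.equivSubtype.symm.permCongr (Equiv.Perm.subtypePerm e fun u => (he u).symm)

theorem semiconj_extFun_relabel {n k : ℕ} (e : ℕ ≃ ℕ) (hk : ∀ u, u < k ↔ e u < k)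
    (hn : ∀ u, u < n ↔ e u < n) (ζ : {π : Fin k → Fin n // Injective π}) :
    Semiconj e (extFun ζ.1) (extFun (relabel (finPerm e hk) (finPerm e hn) ζ).1) := by
  intro u
  by_cases hu : u < k
  · have hσ : (finPerm e hk).symm ⟨e u, (hk u).1 hu⟩ = ⟨u, hu⟩ := Fin.ext (e.symm_apply_apply u)
    simp only [extFun, hu, (hk u).1 hu, dif_pos]
    change e (ζ.1 ⟨u, hu⟩) = (finPerm e hn (ζ.1 ((finPerm e hk).symm ⟨e u, (hk u).1 hu⟩)) : ℕ)
    rw [hσ]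
    rfl
  · simp [extFun, hu, (hk u).not.1 hu]

/-- If `π` and `ρ` have the same cycle type, then for every cycle type (represented by a
`k`-permutation `τ`), `π` and `ρ` have the same number of neighbors of that cycle type
in the arrangement graph `A(n,k)`. -/
theorem card_neighbors_of_cycleType_eq (n k : ℕ) (hkn : k ≤ n)
    (π ρ : {π : Fin k → Fin n // Function.Injective π}) (h : SameCycleType π.1 ρ.1)
    (τ : {π : Fin k → Fin n // Function.Injective π}) :
    Nat.card {ζ // (arrangementGraph n k).Adj π ζ ∧ SameCycleType ζ.1 τ.1} =
      Nat.card {ζ // (arrangementGraph n k).Adj ρ ζ ∧ SameCycleType ζ.1 τ.1} := by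
  obtain ⟨e, he, hk, hn⟩ := exists_semiconj_of_card_eq hkn (isExtFun_extFun π.2)
    (isExtFun_extFun ρ.2) (fun i => (h i).1)
    (fun i => by rw [card_pathStarts_extFun, card_pathStarts_extFun, (h i).2])
  set Φ := relabel (finPerm e hk) (finPerm e hn)
  have hΦ (ζ) : Semiconj e (extFun ζ.1) (extFun (Φ ζ).1) := semiconj_extFun_relabel e hk hn ζ
  have hΦπ : Φ π = ρ := Subtype.ext <| extFun_injective <| funext fun v => by
    obtain ⟨u, rfl⟩ := e.surjective v
    rw [← (hΦ π).eq, he.eq]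
  refine Nat.card_congr (Φ.toEquiv.subtypeEquiv fun ζ => ?_)
  have hζ := sameCycleType_of_semiconj e hk (hΦ ζ)
  rw [← hΦπ]
  exact and_congr Φ.map_adj_iff.symm ⟨hζ.symm.trans, hζ.trans⟩
end

section
/- For n ≥ 2k, the adjacency matrix A of the arrangement graph A(n,k) satisfies A = MᵀM - kI, where M is the inclusion matrix of (k-1)-cliques versus k-cliques of the graph H_{n,k}; consequently -k is the smallest eigenvalue of A(n,k) and its multiplicity is at least n(n-1)···(n-k+2)·(n-2k+1). -/
attribute [local instance] Classical.propDecidable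

open Matrix

/-- The graph `H_{n,k}`: vertices `a_{ij} = (i,j)` for `i ∈ [k]`, `j ∈ [n]`, with
`a_{ij} ~ a_{rs}` iff `i ≠ r` and `j ≠ s` (the complete multipartite graph `K_{n,…,n}`
minus the edges joining equal second indices). -/
def Hgraph (n k : ℕ) : SimpleGraph (Fin k × Fin n) where
  Adj p q := p.1 ≠ q.1 ∧ p.2 ≠ q.2
  symm := by constructor; rintro p q ⟨h1, h2⟩; exact ⟨h1.symm, h2.symm⟩
  loopless := by constructor; rintro p ⟨h, -⟩; exact h rfl

/-- The inclusion matrix of `(k-1)`-cliques versus `k`-cliques of `H_{n,k}`. -/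
noncomputable def inclusionMatrix (n k : ℕ) :
    Matrix {D : Finset (Fin k × Fin n) // (Hgraph n k).IsNClique (k - 1) D}
      {D : Finset (Fin k × Fin n) // (Hgraph n k).IsNClique k D} ℤ :=
  Matrix.of fun D E => if D.1 ⊆ E.1 then 1 else 0


/-!
Two `k`-cliques of `H_{n,k}` coming from `k`-permutations `π`, `ρ` intersect exactly in the
positions where `π` and `ρ` agree, so `(MᵀM)(π, ρ) = C(a, k-1)` where `a` is the number of
agreements. This is `k`, `1` or `0` according as `π = ρ`, `π ~ ρ` or neither, which gives
`A = MᵀM - kI`. As `MᵀM` is positive semidefinite, the spectrum of `A` lies in `[-k, ∞)`, and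
`ker M` lies in the `-k`-eigenspace; its dimension is at least the number of columns minus the
number of rows, `n^(k) - k·n^(k-1) = n^(k-1)(n-2k+1)` (falling factorials).
-/

open Finset

section LinearAlgebra

variable {ι κ : Type*} [Fintype ι] [Fintype κ]

theorem Matrix.neg_le_of_mem_spectrum_transpose_mul_self_sub [DecidableEq κ] (N : Matrix ι κ ℝ)
    (r : ℝ) {μ : ℝ} (hμ : μ ∈ spectrum ℝ (Nᵀ * N - r • 1)) : -r ≤ μ := by
  rw [← Algebra.algebraMap_eq_smul_one, ← spectrum.sub_singleton_eq, Set.sub_singleton] at hμ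
  obtain ⟨x, hx, rfl⟩ := hμ
  have hpsd : (Nᵀ * N).PosSemidef := by
    simpa [conjTranspose_eq_transpose_of_trivial] using posSemidef_conjTranspose_mul_self N
  have : 0 ≤ x := (posSemidef_iff_isHermitian_and_spectrum_nonneg.mp hpsd).2 hx
  linarith

theorem Matrix.ker_mulVecLin_le_eigenspace_transpose_mul_self_sub {R : Type*} [CommRing R]
    [DecidableEq κ] (N : Matrix ι κ R) (r : R) :
    LinearMap.ker N.mulVecLin ≤ Module.End.eigenspace (toLin' (Nᵀ * N - r • 1)) (-r) := by
  intro v hv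
  rw [LinearMap.mem_ker, mulVecLin_apply] at hv
  rw [Module.End.mem_eigenspace_iff, toLin'_apply, sub_mulVec, ← mulVec_mulVec, hv,
    mulVec_zero, smul_mulVec, one_mulVec, zero_sub, neg_smul]

theorem Matrix.card_sub_card_le_finrank_ker_mulVecLin {K : Type*} [Field K] (N : Matrix ι κ K) :
    Fintype.card κ - Fintype.card ι ≤ Module.finrank K (LinearMap.ker N.mulVecLin) := by
  have hrank := LinearMap.finrank_range_add_finrank_ker N.mulVecLin
  have hheight : N.rank ≤ Fintype.card ι := N.rank_le_card_height
  rw [Module.finrank_pi] at hrank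
  rw [Matrix.rank] at hheight
  omega

end LinearAlgebra

def SimpleGraph.cliqueInclusionMatrix (R : Type*) [Zero R] [One R] {V : Type*} [DecidableEq V]
    (G : SimpleGraph V) (s t : ℕ) :
    Matrix {D : Finset V // G.IsNClique s D} {E : Finset V // G.IsNClique t E} R :=
  Matrix.of fun D E => if D.1 ⊆ E.1 then 1 else 0

theorem SimpleGraph.cliqueInclusionMatrix_transpose_mul_self_apply {R : Type*}
    [NonAssocSemiring R] {V : Type*} [Fintype V] [DecidableEq V] (G : SimpleGraph V)
    [DecidableRel G.Adj] (s t : ℕ)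
    (E E' : {E : Finset V // G.IsNClique t E}) :
    ((G.cliqueInclusionMatrix R s t)ᵀ * G.cliqueInclusionMatrix R s t) E E' =
      ((#(E.1 ∩ E'.1)).choose s : R) := by
  have hentry : ∀ D : {D : Finset V // G.IsNClique s D},
      (G.cliqueInclusionMatrix R s t)ᵀ E D * G.cliqueInclusionMatrix R s t D E' =
        if D.1 ⊆ E.1 ∩ E'.1 then 1 else 0 := by
    intro D
    simp only [transpose_apply, cliqueInclusionMatrix, of_apply, subset_inter_iff,
      ite_zero_mul_ite_zero, mul_one]
  rw [mul_apply, Finset.sum_congr rfl fun D _ => hentry D, sum_boole, ← card_powersetCard]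
  congr 1
  refine card_bij (fun D _ => D.1) ?_ (fun D _ D' _ => Subtype.ext) ?_
  · intro D hD
    exact mem_powersetCard.mpr ⟨(mem_filter.mp hD).2, D.2.2⟩
  · intro S hS
    obtain ⟨hsub, hcard⟩ := mem_powersetCard.mp hS
    have hclique : G.IsNClique s S :=
      ⟨E.2.1.subset (by exact_mod_cast hsub.trans inter_subset_left), hcard⟩
    exact ⟨⟨S, hclique⟩, mem_filter.mpr ⟨mem_univ _, hsub⟩, rfl⟩

theorem card_image_prodMk_inter_image_prodMk {α β : Type*} [Fintype α] [DecidableEq α]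
    [DecidableEq β] (f g : α → β) :
    #((univ.image fun i => (i, f i)) ∩ univ.image fun i => (i, g i)) = #{i | f i = g i} := by
  have hinter : ((univ.image fun i => (i, f i)) ∩ univ.image fun i => (i, g i)) =
      ({i | f i = g i} : Finset α).image fun i => (i, f i) := by
    ext ⟨a, b⟩
    simp only [mem_inter, mem_image, mem_univ, true_and, mem_filter, Prod.mk.injEq]
    constructor
    · rintro ⟨⟨i, rfl, rfl⟩, ⟨j, rfl, hg⟩⟩
      exact ⟨j, hg.symm, rfl, rfl⟩
    · rintro ⟨a, hfg, rfl, rfl⟩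
      exact ⟨⟨a, rfl, rfl⟩, ⟨a, rfl, hfg.symm⟩⟩
  rw [hinter, card_image_of_injective _ fun a b h => congrArg Prod.fst h]

theorem Hgraph_isClique_iff {n k : ℕ} {D : Set (Fin k × Fin n)} :
    (Hgraph n k).IsClique D ↔ D.InjOn Prod.fst ∧ D.InjOn Prod.snd := by
  constructor
  · intro hD
    exact ⟨fun p hp q hq h => by_contra fun hpq => (hD hp hq hpq).1 h,
      fun p hp q hq h => by_contra fun hpq => (hD hp hq hpq).2 h⟩
  · rintro ⟨hfst, hsnd⟩ p hp q hq hpq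
    exact ⟨fun h => hpq (hfst hp hq h), fun h => hpq (hsnd hp hq h)⟩

theorem Hgraph_exists_eq_image_succAbove {n m : ℕ} {D : Finset (Fin (m + 1) × Fin n)}
    (hD : (Hgraph n (m + 1)).IsNClique m D) :
    ∃ (i : Fin (m + 1)) (e : Fin m ↪ Fin n), D = univ.image fun j => (i.succAbove j, e j) := by
  obtain ⟨hfst, hsnd⟩ := Hgraph_isClique_iff.mp hD.isClique
  have hrows : #(D.image Prod.fst) = m := by rw [card_image_of_injOn hfst, hD.card_eq]
  obtain ⟨i, -, hi⟩ := exists_mem_notMem_of_card_lt_card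
    (s := D.image Prod.fst) (t := univ) (by simp [hrows])
  have hrows_eq : D.image Prod.fst = univ.erase i :=
    eq_of_subset_of_card_le (fun r hr => mem_erase.mpr ⟨fun h => hi (h ▸ hr), mem_univ r⟩)
      (by simp [hrows])
  have hrow : ∀ j, ∃ b, (i.succAbove j, b) ∈ D := by
    intro j
    have hj : i.succAbove j ∈ D.image Prod.fst :=
      hrows_eq ▸ mem_erase.mpr ⟨i.succAbove_ne j, mem_univ _⟩
    obtain ⟨p, hp, hpj⟩ := mem_image.mp hj
    exact ⟨p.2, hpj ▸ hp⟩
  choose e he using hrow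
  have he_inj : Function.Injective e := fun a b hab =>
    Fin.succAbove_right_injective (congrArg Prod.fst (hsnd (he a) (he b) hab))
  refine ⟨i, ⟨e, he_inj⟩, (eq_of_subset_of_card_le ?_ ?_).symm⟩
  · exact image_subset_iff.mpr fun j _ => he j
  · rw [card_image_of_injective _ fun a b h => Fin.succAbove_right_injective (congrArg Prod.fst h),
      card_univ, Fintype.card_fin, hD.card_eq]

theorem Hgraph_card_nClique_le (n m : ℕ) :
    Fintype.card {D : Finset (Fin (m + 1) × Fin n) // (Hgraph n (m + 1)).IsNClique m D} ≤
      (m + 1) * n.descFactorial m := by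
  choose i e he using fun D : {D // (Hgraph n (m + 1)).IsNClique m D} =>
    Hgraph_exists_eq_image_succAbove D.2
  have hinj : Function.Injective fun D => (i D, e D) := by
    intro D D' h
    obtain ⟨hi, he'⟩ := Prod.mk.inj h
    exact Subtype.ext (by rw [he D, he D', hi, he'])
  simpa [Fintype.card_embedding_eq] using Fintype.card_le_of_injective _ hinj

theorem arrangementGraph_adj_iff {n k : ℕ}
    {π ρ : {π : Fin k → Fin n // Function.Injective π}} :
    (arrangementGraph n k).Adj π ρ ↔ #{i | π.1 i ≠ ρ.1 i} = 1 := by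
  rw [card_eq_one]
  constructor
  · rintro ⟨i, hi, hunique⟩
    exact ⟨i, ext fun j => by simpa using ⟨hunique j, fun h => h ▸ hi⟩⟩
  · rintro ⟨i, hdiff⟩
    have hmem : ∀ j, π.1 j ≠ ρ.1 j ↔ j = i := fun j => by
      simpa using Finset.ext_iff.mp hdiff j
    exact ⟨i, (hmem i).mpr rfl, fun j hj => (hmem j).mp hj⟩

theorem arrangementGraph_adjMatrix_apply {R : Type*} [NonAssocRing R] {n m : ℕ}
    (π ρ : {π : Fin (m + 1) → Fin n // Function.Injective π}) :
    (arrangementGraph n (m + 1)).adjMatrix R π ρ =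
      ((#{i | π.1 i = ρ.1 i}).choose m : R) - if π = ρ then ((m + 1 : ℕ) : R) else 0 := by
  set a := #{i | π.1 i = ρ.1 i}
  set d := #{i | π.1 i ≠ ρ.1 i}
  have hsum : a + d = m + 1 := by
    rw [card_filter_add_card_filter_not, card_univ, Fintype.card_fin]
  have heq : π = ρ ↔ d = 0 := by
    simp [d, card_eq_zero, filter_eq_empty_iff, Subtype.ext_iff, funext_iff]
  rw [SimpleGraph.adjMatrix_apply, arrangementGraph_adj_iff]
  obtain hd | hd | hd : d = 0 ∨ d = 1 ∨ 2 ≤ d := by omega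
  · rw [if_neg (show d ≠ 1 by omega), if_pos (heq.mpr hd), show a = m + 1 by omega,
      Nat.choose_succ_self_right, sub_self]
  · rw [if_pos hd, if_neg (mt heq.mp (by omega)), show a = m by omega,
      Nat.choose_self, Nat.cast_one, sub_zero]
  · rw [if_neg (show d ≠ 1 by omega), if_neg (mt heq.mp (by omega)),
      Nat.choose_eq_zero_of_lt (show a < m by omega), Nat.cast_zero, sub_zero]

theorem arrangementGraph_adjMatrix_apply_eq_gram {R : Type*} [NonAssocRing R] {n m : ℕ}
    (c : {π : Fin (m + 1) → Fin n // Function.Injective π} ≃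
      {D : Finset (Fin (m + 1) × Fin n) // (Hgraph n (m + 1)).IsNClique (m + 1) D})
    (hc : ∀ π, (c π).1 = univ.image fun i => (i, π.1 i))
    (π ρ : {π : Fin (m + 1) → Fin n // Function.Injective π}) :
    (arrangementGraph n (m + 1)).adjMatrix R π ρ =
      (((Hgraph n (m + 1)).cliqueInclusionMatrix R m (m + 1))ᵀ *
        (Hgraph n (m + 1)).cliqueInclusionMatrix R m (m + 1)) (c π) (c ρ) -
          if π = ρ then ((m + 1 : ℕ) : R) else 0 := by
  rw [SimpleGraph.cliqueInclusionMatrix_transpose_mul_self_apply, hc, hc,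
    card_image_prodMk_inter_image_prodMk, arrangementGraph_adjMatrix_apply]

theorem Nat.descFactorial_succ_sub_mul (n m : ℕ) :
    n.descFactorial (m + 1) - (m + 1) * n.descFactorial m =
      n.descFactorial m * (n - (2 * (m + 1) - 1)) := by
  rw [Nat.descFactorial_succ, ← Nat.sub_mul, mul_comm]
  congr 1
  omega

/-- For `n ≥ 2k`, under the canonical identification `c` of `k`-permutations with the
`k`-cliques of `H_{n,k}`, the adjacency matrix `A` of `A(n,k)` satisfies
`A = MᵀM - kI` where `M` is the inclusion matrix of `(k-1)`-cliques versus `k`-cliques;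
consequently `-k` is the smallest eigenvalue of `A(n,k)`, and its multiplicity is at
least `n(n-1)⋯(n-k+2)(n-2k+1)`. -/
theorem arrangementGraph_smallest_eigenvalue (n k : ℕ) (hk : 1 ≤ k) (hnk : 2 * k ≤ n)
    (c : {π : Fin k → Fin n // Function.Injective π} ≃
        {D : Finset (Fin k × Fin n) // (Hgraph n k).IsNClique k D})
    (hc : ∀ π, (c π).1 = Finset.univ.image fun i => (i, π.1 i)) :
    (∀ π ρ, (arrangementGraph n k).adjMatrix ℤ π ρ =
        ((inclusionMatrix n k)ᵀ * inclusionMatrix n k) (c π) (c ρ) -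
          if π = ρ then (k : ℤ) else 0) ∧
      (∀ μ ∈ spectrum ℝ ((arrangementGraph n k).adjMatrix ℝ), -(k : ℝ) ≤ μ) ∧
      Module.End.HasEigenvalue
        (Matrix.toLin' ((arrangementGraph n k).adjMatrix ℝ)) (-(k : ℝ)) ∧
      n.descFactorial (k - 1) * (n - (2 * k - 1)) ≤
        Module.finrank ℝ
          (Module.End.eigenspace
            (Matrix.toLin' ((arrangementGraph n k).adjMatrix ℝ)) (-(k : ℝ))) := by
  obtain ⟨m, rfl⟩ : ∃ m, k = m + 1 := ⟨k - 1, by omega⟩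
  set N := ((Hgraph n (m + 1)).cliqueInclusionMatrix ℝ m (m + 1)).submatrix id c
  have hA :
      (arrangementGraph n (m + 1)).adjMatrix ℝ = Nᵀ * N - ((m + 1 : ℕ) : ℝ) • 1 := by
    ext π ρ
    have hgram : (Nᵀ * N) π ρ = (((Hgraph n (m + 1)).cliqueInclusionMatrix ℝ m (m + 1))ᵀ *
        (Hgraph n (m + 1)).cliqueInclusionMatrix ℝ m (m + 1)) (c π) (c ρ) := rfl
    rw [arrangementGraph_adjMatrix_apply_eq_gram c hc, Matrix.sub_apply, hgram,
      Matrix.smul_apply, one_apply, smul_ite, smul_eq_mul, mul_one, smul_zero]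
  have hmult : n.descFactorial m * (n - (2 * (m + 1) - 1)) ≤ Module.finrank ℝ
      (Module.End.eigenspace (toLin' ((arrangementGraph n (m + 1)).adjMatrix ℝ))
        (-((m + 1 : ℕ) : ℝ))) := by
    have hvertices : Fintype.card {π : Fin (m + 1) → Fin n // Function.Injective π} =
        n.descFactorial (m + 1) := by
      rw [Fintype.card_congr (Equiv.subtypeInjectiveEquivEmbedding _ _),
        Fintype.card_embedding_eq, Fintype.card_fin, Fintype.card_fin]
    calc n.descFactorial m * (n - (2 * (m + 1) - 1))
        = n.descFactorial (m + 1) - (m + 1) * n.descFactorial m :=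
          (Nat.descFactorial_succ_sub_mul n m).symm
      _ ≤ Fintype.card {π : Fin (m + 1) → Fin n // Function.Injective π} -
          Fintype.card {D // (Hgraph n (m + 1)).IsNClique m D} :=
          hvertices ▸ Nat.sub_le_sub_left (Hgraph_card_nClique_le n m) _
      _ ≤ Module.finrank ℝ (LinearMap.ker N.mulVecLin) :=
          N.card_sub_card_le_finrank_ker_mulVecLin
      _ ≤ _ := hA ▸ Submodule.finrank_mono
          (N.ker_mulVecLin_le_eigenspace_transpose_mul_self_sub _)
  have hmult_pos : 0 < n.descFactorial m * (n - (2 * (m + 1) - 1)) :=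
    Nat.mul_pos (Nat.descFactorial_pos.mpr (by omega)) (by omega)
  -- `inclusionMatrix n (m + 1)` is `cliqueInclusionMatrix ℤ _ m (m + 1)` up to `m + 1 - 1 ≡ m`.
  refine ⟨fun π ρ => arrangementGraph_adjMatrix_apply_eq_gram c hc π ρ,
    fun μ hμ => N.neg_le_of_mem_spectrum_transpose_mul_self_sub _ (hA ▸ hμ),
    Module.End.hasEigenvalue_iff.mpr fun hbot => ?_, hmult⟩
  rw [hbot, finrank_bot] at hmult
  omega
end
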